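/- arXiv:2211.10742 — 3 statements merged into one kernel-verified Lean document; each statement's English description precedes it below -/
import Mathlib

section
/- Let X ⊆ ℝ^{d_X} and Y ⊆ ℝ^{d_Y} be compact Borel sets, μ ∈ P(X), ν ∈ P(Y), let p ∈ ℕ be even, and let c_X : X × X → ℝ and c_Y : Y × Y → ℝ be polynomials. Then the Gromov-Wasserstein problem GW_p^p(c_X, c_Y, μ, ν) = inf_{π ∈ Π(X×Y; μ,ν)} ∬ (c_X(x,x') − c_Y(y,y'))^p dπ(x,y) dπ(x',y') equals the generalized moment problem inf_{y ∈ Π_mom} L^{GW_p}(y), where Π_mom is the set of sequences y ∈ ℝ^{ℕ^{d_X + d_Y}} admitting a representing finite positive Borel measure π on X × Y with marginal moment constraints y_{(α,0)} = m_α(μ) and y_{(0,β)} = m_β(ν) for all α ∈ ℕ^{d_X}, β ∈ ℕ^{d_Y}, and L^{GW_p}(y) = Σ_k a_k y_{γ^L_k} y_{γ^R_k} is the quadratic functional obtained by expanding (c_X(x,x') − c_Y(y,y'))^p = Σ_k a_k z^{γ_k} as a polynomial in z = (x,y,x',y') and splitting each exponent γ_k = (γ^L_k, γ^R_k), so that L^{GW_p}(m(π))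 equals the double integral for every probability measure π on X × Y. -/
open MeasureTheory

namespace Stmt12

variable {dX dY : ℕ}

/-- The monomial `x^α y^β` on `ℝ^{d_X} × ℝ^{d_Y}`. -/
def mon2 (α : (Fin dX → ℕ) × (Fin dY → ℕ)) (z : (Fin dX → ℝ) × (Fin dY → ℝ)) : ℝ :=
  (∏ i, z.1 i ^ α.1 i) * ∏ j, z.2 j ^ α.2 j

/-- Couplings `Π(X×Y; μ, ν)`. -/
def CouplingsXY (X : Set (Fin dX → ℝ)) (Y : Set (Fin dY → ℝ))
    (μ : Measure (Fin dX → ℝ)) (ν : Measure (Fin dY → ℝ)) :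
    Set (Measure ((Fin dX → ℝ) × (Fin dY → ℝ))) :=
  {π | IsProbabilityMeasure π ∧ π (X ×ˢ Y)ᶜ = 0 ∧
    π.map Prod.fst = μ ∧ π.map Prod.snd = ν}

/-- `Π_mom`: sequences `y ∈ ℝ^{ℕ^{d_X+d_Y}}` admitting a representing finite positive Borel
measure on `X × Y` and satisfying the marginal moment constraints `y_{(α,0)} = m_α(μ)` and
`y_{(0,β)} = m_β(ν)`. -/
def GWMomCouplings (X : Set (Fin dX → ℝ)) (Y : Set (Fin dY → ℝ))
    (μ : Measure (Fin dX → ℝ)) (ν : Measure (Fin dY → ℝ)) :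
    Set (((Fin dX → ℕ) × (Fin dY → ℕ)) → ℝ) :=
  {y | (∃ π : Measure ((Fin dX → ℝ) × (Fin dY → ℝ)), IsFiniteMeasure π ∧
      π (X ×ˢ Y)ᶜ = 0 ∧ ∀ α, y α = ∫ z, mon2 α z ∂π) ∧
    (∀ α : Fin dX → ℕ, y (α, fun _ => 0) = ∫ x, ∏ i, x i ^ α i ∂μ) ∧
    (∀ β : Fin dY → ℕ, y ((fun _ => 0), β) = ∫ x, ∏ j, x j ^ β j ∂ν)}

/-- The quadratic functional `L^{GW_p}(y) = Σ_k a_k y_{γ^L_k} y_{γ^R_k}` built from the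
coefficients `a` of the expansion of `(c_X − c_Y)^p`. -/
noncomputable def LGW
    (a : (((Fin dX → ℕ) × (Fin dY → ℕ)) × ((Fin dX → ℕ) × (Fin dY → ℕ))) →₀ ℝ)
    (y : ((Fin dX → ℕ) × (Fin dY → ℕ)) → ℝ) : ℝ :=
  a.sum fun γ c => c * y γ.1 * y γ.2


/-!
Both infima are taken over the same set of values. A coupling `π` has a moment sequence `m(π)`
in `Π_mom`, and expanding `(c_X − c_Y)^p` into monomials turns `L^{GW_p}(m(π))` into the
Gromov–Wasserstein double integral. Conversely, a finite measure on the compact set `X × Y`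
representing some `y ∈ Π_mom` has marginals with the moments of `μ` and `ν`; by
Stone–Weierstrass, polynomials are uniformly dense in `C(X)` and `C(Y)`, so these moments
determine the marginals, which are therefore `μ` and `ν`.
-/

theorem _root_.Continuous.integrable_of_measure_compl_eq_zero {E : Type*} [MeasurableSpace E]
    [TopologicalSpace E] [OpensMeasurableSpace E] [T2Space E] {π : Measure E} [IsFiniteMeasure π]
    {K : Set E} {g : E → ℝ} (hg : Continuous g) (hK : IsCompact K) (hπ : π Kᶜ = 0) :
    Integrable g π := by
  rw [← Measure.restrict_eq_self_of_ae_mem (mem_ae_iff.2 hπ)]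
  exact hg.continuousOn.integrableOn_compact hK

theorem integral_integral_finsuppSum_mul {κ E : Type*} [MeasurableSpace E] {π : Measure E}
    {f : κ → E → ℝ} (hf : ∀ i, Integrable (f i) π) (a : κ × κ →₀ ℝ) :
    ∫ z, ∫ z', a.sum (fun γ c => c * (f γ.1 z * f γ.2 z')) ∂π ∂π =
      a.sum fun γ c => c * (∫ z, f γ.1 z ∂π) * ∫ z, f γ.2 z ∂π := by
  have inner (z : E) : ∫ z', a.sum (fun γ c => c * (f γ.1 z * f γ.2 z')) ∂π =
      ∑ γ ∈ a.support, (a γ * ∫ z', f γ.2 z' ∂π) * f γ.1 z := by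
    simp_rw [Finsupp.sum, ← mul_assoc]
    rw [integral_finsetSum _ fun γ _ => (hf γ.2).const_mul _]
    simp_rw [integral_const_mul, mul_right_comm]
  simp_rw [inner]
  rw [integral_finsetSum _ fun γ _ => (hf γ.1).const_mul _, Finsupp.sum]
  simp_rw [integral_const_mul, mul_right_comm]

section MvPolynomial

variable {ι : Type*}

theorem exists_mvPolynomial_near_of_isCompact {S : Set (ι → ℝ)} (hS : IsCompact S)
    {F : (ι → ℝ) → ℝ} (hF : Continuous F) {ε : ℝ} (hε : 0 < ε) :
    ∃ q : MvPolynomial ι ℝ, ∀ x ∈ S, |MvPolynomial.eval x q - F x| < ε := by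
  have : CompactSpace S := isCompact_iff_compactSpace.mp hS
  let coord : ι → C(S, ℝ) := fun i =>
    ⟨fun x => (x : ι → ℝ) i, (continuous_apply i).comp continuous_subtype_val⟩
  have aeval_coord (q : MvPolynomial ι ℝ) (x : S) :
      MvPolynomial.aeval (R := ℝ) coord q x = MvPolynomial.eval (x : ι → ℝ) q := by
    induction q using MvPolynomial.induction_on with
    | C c => simp
    | add p q hp hq => simp [hp, hq]
    | mul_X p i hp => simp [hp, coord]
  have hsep : (MvPolynomial.aeval (R := ℝ) coord).range.SeparatesPoints := by
    intro x y hxy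
    obtain ⟨i, hi⟩ := Function.ne_iff.mp (Subtype.coe_injective.ne hxy)
    exact ⟨coord i, ⟨_, ⟨MvPolynomial.X i, by simp⟩, rfl⟩, hi⟩
  obtain ⟨⟨g, q, rfl⟩, hg⟩ :=
    ContinuousMap.exists_mem_subalgebra_near_continuous_of_separatesPoints _ hsep
      (fun x : S => F x) (by fun_prop) ε hε
  exact ⟨q, fun x hx => by simpa [aeval_coord] using hg ⟨x, hx⟩⟩

theorem integral_eq_of_forall_integral_eval_eq {κ μ : Measure (ι → ℝ)} [Finite ι]
    [IsFiniteMeasure κ] [IsFiniteMeasure μ] {S : Set (ι → ℝ)} (hS : IsCompact S)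
    (hκ : κ Sᶜ = 0) (hμ : μ Sᶜ = 0)
    (h : ∀ q : MvPolynomial ι ℝ, ∫ x, MvPolynomial.eval x q ∂κ = ∫ x, MvPolynomial.eval x q ∂μ)
    {F : (ι → ℝ) → ℝ} (hF : Continuous F) :
    ∫ x, F x ∂κ = ∫ x, F x ∂μ := by
  have near (ρ : Measure (ι → ℝ)) [IsFiniteMeasure ρ] (hρ : ρ Sᶜ = 0) {δ : ℝ}
      {q : MvPolynomial ι ℝ} (hq : ∀ x ∈ S, |MvPolynomial.eval x q - F x| < δ) :
      dist (∫ x, MvPolynomial.eval x q ∂ρ) (∫ x, F x ∂ρ) ≤ δ * ρ.real Set.univ := by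
    rw [dist_eq_norm, ← integral_sub
      ((MvPolynomial.continuous_eval q).integrable_of_measure_compl_eq_zero hS hρ)
      (hF.integrable_of_measure_compl_eq_zero hS hρ)]
    refine norm_integral_le_of_norm_le_const ?_
    filter_upwards [mem_ae_iff.2 hρ] with x hx using (hq x hx).le
  set C := κ.real Set.univ + μ.real Set.univ
  refine eq_of_forall_dist_le fun ε hε => ?_
  obtain ⟨q, hq⟩ := exists_mvPolynomial_near_of_isCompact hS hF
    (show 0 < ε / (C + 1) by positivity)
  calc dist (∫ x, F x ∂κ) (∫ x, F x ∂μ)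
      ≤ dist (∫ x, MvPolynomial.eval x q ∂κ) (∫ x, F x ∂κ)
        + dist (∫ x, MvPolynomial.eval x q ∂μ) (∫ x, F x ∂μ) := by
        simpa [h q] using dist_triangle_left (∫ x, F x ∂κ) (∫ x, F x ∂μ)
          (∫ x, MvPolynomial.eval x q ∂μ)
    _ ≤ ε / (C + 1) * C := by
        rw [mul_add]; exact add_le_add (near κ hκ hq) (near μ hμ hq)
    _ ≤ ε := by
        rw [div_mul_eq_mul_div, div_le_iff₀ (by positivity)]; nlinarith

theorem integral_eval_eq_sum_coeff_mul_moment [Fintype ι] {ρ : Measure (ι → ℝ)}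
    (hρ : ∀ α : ι → ℕ, Integrable (fun x => ∏ i, x i ^ α i) ρ) (q : MvPolynomial ι ℝ) :
    ∫ x, MvPolynomial.eval x q ∂ρ =
      ∑ γ ∈ q.support, MvPolynomial.coeff γ q * ∫ x, ∏ i, x i ^ γ i ∂ρ := by
  simp_rw [MvPolynomial.eval_eq']
  rw [integral_finsetSum _ fun (γ : ι →₀ ℕ) _ => (hρ γ).const_mul (MvPolynomial.coeff γ q)]
  simp_rw [integral_const_mul]

theorem ext_of_integral_monomial_eq [Fintype ι] {κ μ : Measure (ι → ℝ)}
    [IsFiniteMeasure κ] [IsFiniteMeasure μ] {S : Set (ι → ℝ)} (hS : IsCompact S)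
    (hκ : κ Sᶜ = 0) (hμ : μ Sᶜ = 0)
    (hmom : ∀ α : ι → ℕ, ∫ x, ∏ i, x i ^ α i ∂κ = ∫ x, ∏ i, x i ^ α i ∂μ) :
    κ = μ := by
  have hmon (ρ : Measure (ι → ℝ)) [IsFiniteMeasure ρ] (hρ : ρ Sᶜ = 0) (α : ι → ℕ) :
      Integrable (fun x => ∏ i, x i ^ α i) ρ :=
    Continuous.integrable_of_measure_compl_eq_zero (by fun_prop) hS hρ
  refine ext_of_forall_integral_eq_of_IsFiniteMeasure fun f =>
    integral_eq_of_forall_integral_eval_eq hS hκ hμ (fun q => ?_) f.continuous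
  simp only [integral_eval_eq_sum_coeff_mul_moment (hmon κ hκ),
    integral_eval_eq_sum_coeff_mul_moment (hmon μ hμ), hmom]

end MvPolynomial

theorem continuous_mon2 (α : (Fin dX → ℕ) × (Fin dY → ℕ)) : Continuous (mon2 α) := by
  unfold mon2; fun_prop

theorem integrable_mon2 {X : Set (Fin dX → ℝ)} {Y : Set (Fin dY → ℝ)} (hX : IsCompact X)
    (hY : IsCompact Y) {π : Measure ((Fin dX → ℝ) × (Fin dY → ℝ))} [IsFiniteMeasure π]
    (hπ : π (X ×ˢ Y)ᶜ = 0) (α : (Fin dX → ℕ) × (Fin dY → ℕ)) : Integrable (mon2 α) π :=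
  (continuous_mon2 α).integrable_of_measure_compl_eq_zero (hX.prod hY) hπ

noncomputable def moments (π : Measure ((Fin dX → ℝ) × (Fin dY → ℝ))) :
    ((Fin dX → ℕ) × (Fin dY → ℕ)) → ℝ :=
  fun α => ∫ z, mon2 α z ∂π

theorem moments_fst (π : Measure ((Fin dX → ℝ) × (Fin dY → ℝ))) (α : Fin dX → ℕ) :
    moments π (α, fun _ => 0) = ∫ x, ∏ i, x i ^ α i ∂(π.map Prod.fst) := by
  rw [integral_map measurable_fst.aemeasurable (Continuous.aestronglyMeasurable (by fun_prop))]
  simp [moments, mon2]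

theorem moments_snd (π : Measure ((Fin dX → ℝ) × (Fin dY → ℝ))) (β : Fin dY → ℕ) :
    moments π (fun _ => 0, β) = ∫ y, ∏ j, y j ^ β j ∂(π.map Prod.snd) := by
  rw [integral_map measurable_snd.aemeasurable (Continuous.aestronglyMeasurable (by fun_prop))]
  simp [moments, mon2]

theorem map_fst_compl_eq_zero {X : Set (Fin dX → ℝ)} {Y : Set (Fin dY → ℝ)}
    (hX : MeasurableSet X) {π : Measure ((Fin dX → ℝ) × (Fin dY → ℝ))}
    (hπ : π (X ×ˢ Y)ᶜ = 0) : π.map Prod.fst Xᶜ = 0 := by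
  rw [Measure.map_apply measurable_fst hX.compl]
  exact measure_mono_null (Set.compl_subset_compl.2 (Set.prod_subset_preimage_fst X Y)) hπ

theorem map_snd_compl_eq_zero {X : Set (Fin dX → ℝ)} {Y : Set (Fin dY → ℝ)}
    (hY : MeasurableSet Y) {π : Measure ((Fin dX → ℝ) × (Fin dY → ℝ))}
    (hπ : π (X ×ˢ Y)ᶜ = 0) : π.map Prod.snd Yᶜ = 0 := by
  rw [Measure.map_apply measurable_snd hY.compl]
  exact measure_mono_null (Set.compl_subset_compl.2 (Set.prod_subset_preimage_snd X Y)) hπ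

theorem moments_mem_gwMomCouplings {X : Set (Fin dX → ℝ)} {Y : Set (Fin dY → ℝ)}
    {μ : Measure (Fin dX → ℝ)} {ν : Measure (Fin dY → ℝ)}
    {π : Measure ((Fin dX → ℝ) × (Fin dY → ℝ))} (hπ : π ∈ CouplingsXY X Y μ ν) :
    moments π ∈ GWMomCouplings X Y μ ν := by
  obtain ⟨hprob, hnull, hfst, hsnd⟩ := hπ
  refine ⟨⟨π, inferInstance, hnull, fun α => rfl⟩, fun α => ?_, fun β => ?_⟩
  · rw [moments_fst, hfst]
  · rw [moments_snd, hsnd]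

theorem gwMomCouplings_eq_image {X : Set (Fin dX → ℝ)} {Y : Set (Fin dY → ℝ)}
    (hX : IsCompact X) (hY : IsCompact Y)
    {μ : Measure (Fin dX → ℝ)} {ν : Measure (Fin dY → ℝ)}
    [IsProbabilityMeasure μ] [IsProbabilityMeasure ν] (hμ : μ Xᶜ = 0) (hν : ν Yᶜ = 0) :
    GWMomCouplings X Y μ ν = moments '' CouplingsXY X Y μ ν := by
  refine subset_antisymm ?_ (Set.image_subset_iff.2 fun π => moments_mem_gwMomCouplings)
  rintro y ⟨⟨π, hfin, hnull, hrep⟩, hmX, hmY⟩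
  obtain rfl : y = moments π := funext hrep
  have hfst : π.map Prod.fst = μ :=
    ext_of_integral_monomial_eq hX (map_fst_compl_eq_zero hX.isClosed.measurableSet hnull) hμ
      fun α => by rw [← moments_fst, hmX]
  have hsnd : π.map Prod.snd = ν :=
    ext_of_integral_monomial_eq hY (map_snd_compl_eq_zero hY.isClosed.measurableSet hnull) hν
      fun β => by rw [← moments_snd, hmY]
  have : IsProbabilityMeasure (π.map Prod.fst) := hfst ▸ inferInstance
  exact ⟨π, ⟨Measure.isProbabilityMeasure_of_map Prod.fst, hnull, hfst, hsnd⟩, rfl⟩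

theorem LGW_moments_eq_integral_integral {p : ℕ}
    {cX : MvPolynomial (Fin dX ⊕ Fin dX) ℝ} {cY : MvPolynomial (Fin dY ⊕ Fin dY) ℝ}
    {a : (((Fin dX → ℕ) × (Fin dY → ℕ)) × ((Fin dX → ℕ) × (Fin dY → ℕ))) →₀ ℝ}
    (ha : ∀ (x x' : Fin dX → ℝ) (y y' : Fin dY → ℝ),
      (MvPolynomial.eval (Sum.elim x x') cX - MvPolynomial.eval (Sum.elim y y') cY) ^ p =
        a.sum fun γ c => c * (mon2 γ.1 (x, y) * mon2 γ.2 (x', y')))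
    {π : Measure ((Fin dX → ℝ) × (Fin dY → ℝ))} (hπ : ∀ α, Integrable (mon2 α) π) :
    LGW a (moments π) =
      ∫ z, ∫ z',
        (MvPolynomial.eval (Sum.elim z.1 z'.1) cX -
          MvPolynomial.eval (Sum.elim z.2 z'.2) cY) ^ p ∂π ∂π := by
  simp_rw [ha, Prod.mk.eta]
  exact (integral_integral_finsuppSum_mul hπ a).symm

theorem stmt_12_general (p : ℕ)
    (X : Set (Fin dX → ℝ)) (Y : Set (Fin dY → ℝ))
    (hX : IsCompact X) (hY : IsCompact Y)
    (μ : Measure (Fin dX → ℝ)) (ν : Measure (Fin dY → ℝ))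
    [IsProbabilityMeasure μ] [IsProbabilityMeasure ν]
    (hμ : μ Xᶜ = 0) (hν : ν Yᶜ = 0)
    (cX : MvPolynomial (Fin dX ⊕ Fin dX) ℝ)
    (cY : MvPolynomial (Fin dY ⊕ Fin dY) ℝ)
    (a : (((Fin dX → ℕ) × (Fin dY → ℕ)) × ((Fin dX → ℕ) × (Fin dY → ℕ))) →₀ ℝ)
    (ha : ∀ (x x' : Fin dX → ℝ) (y y' : Fin dY → ℝ),
      (MvPolynomial.eval (Sum.elim x x') cX - MvPolynomial.eval (Sum.elim y y') cY) ^ p =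
        a.sum fun γ c => c * (mon2 γ.1 (x, y) * mon2 γ.2 (x', y'))) :
    sInf {v | ∃ π ∈ CouplingsXY X Y μ ν,
        v = ∫ z, ∫ z',
          (MvPolynomial.eval (Sum.elim z.1 z'.1) cX -
            MvPolynomial.eval (Sum.elim z.2 z'.2) cY) ^ p ∂π ∂π} =
      sInf {v | ∃ y ∈ GWMomCouplings X Y μ ν, v = LGW a y} ∧
    ∀ π : Measure ((Fin dX → ℝ) × (Fin dY → ℝ)), IsProbabilityMeasure π →
      π (X ×ˢ Y)ᶜ = 0 →
      LGW a (fun α => ∫ z, mon2 α z ∂π) =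
        ∫ z, ∫ z',
          (MvPolynomial.eval (Sum.elim z.1 z'.1) cX -
            MvPolynomial.eval (Sum.elim z.2 z'.2) cY) ^ p ∂π ∂π := by
  have hcost (π : Measure ((Fin dX → ℝ) × (Fin dY → ℝ))) (hprob : IsProbabilityMeasure π)
      (hπ : π (X ×ˢ Y)ᶜ = 0) := LGW_moments_eq_integral_integral ha (integrable_mon2 hX hY hπ)
  refine ⟨?_, hcost⟩
  rw [gwMomCouplings_eq_image hX hY hμ hν]
  congr 1
  ext v
  rw [Set.mem_ofPred_eq, Set.mem_ofPred_eq, Set.exists_mem_image]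
  exact exists_congr fun π => and_congr_right fun ⟨hprob, hπ, _⟩ => by rw [hcost π hprob hπ]

/-- For compact `X ⊆ ℝ^{d_X}`, `Y ⊆ ℝ^{d_Y}`, `μ ∈ P(X)`, `ν ∈ P(Y)`,
even `p`, and polynomial costs `c_X`, `c_Y`, the Gromov-Wasserstein problem
`GW_p^p = inf_{π ∈ Π(X×Y;μ,ν)} ∬ (c_X(x,x') − c_Y(y,y'))^p dπ dπ` equals the generalized
moment problem `inf_{y ∈ Π_mom} L^{GW_p}(y)`, where `a` is the coefficient family of the
polynomial expansion of `(c_X − c_Y)^p`; moreover `L^{GW_p}(m(π))` equals the double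
integral for every probability measure `π` on `X × Y`. -/
theorem stmt_12 (p : ℕ) (hp : Even p)
    (X : Set (Fin dX → ℝ)) (Y : Set (Fin dY → ℝ))
    (hX : IsCompact X) (hY : IsCompact Y)
    (μ : Measure (Fin dX → ℝ)) (ν : Measure (Fin dY → ℝ))
    [IsProbabilityMeasure μ] [IsProbabilityMeasure ν]
    (hμ : μ Xᶜ = 0) (hν : ν Yᶜ = 0)
    (cX : MvPolynomial (Fin dX ⊕ Fin dX) ℝ)
    (cY : MvPolynomial (Fin dY ⊕ Fin dY) ℝ)
    (a : (((Fin dX → ℕ) × (Fin dY → ℕ)) × ((Fin dX → ℕ) × (Fin dY → ℕ))) →₀ ℝ)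
    (ha : ∀ (x x' : Fin dX → ℝ) (y y' : Fin dY → ℝ),
      (MvPolynomial.eval (Sum.elim x x') cX - MvPolynomial.eval (Sum.elim y y') cY) ^ p =
        a.sum fun γ c => c * (mon2 γ.1 (x, y) * mon2 γ.2 (x', y'))) :
    sInf {v | ∃ π ∈ CouplingsXY X Y μ ν,
        v = ∫ z, ∫ z',
          (MvPolynomial.eval (Sum.elim z.1 z'.1) cX -
            MvPolynomial.eval (Sum.elim z.2 z'.2) cY) ^ p ∂π ∂π} =
      sInf {v | ∃ y ∈ GWMomCouplings X Y μ ν, v = LGW a y} ∧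
    ∀ π : Measure ((Fin dX → ℝ) × (Fin dY → ℝ)), IsProbabilityMeasure π →
      π (X ×ˢ Y)ᶜ = 0 →
      LGW a (fun α => ∫ z, mon2 α z ∂π) =
        ∫ z, ∫ z',
          (MvPolynomial.eval (Sum.elim z.1 z'.1) cX -
            MvPolynomial.eval (Sum.elim z.2 z'.2) cY) ^ p ∂π ∂π :=
  stmt_12_general p X Y hX hY μ ν hμ hν cX cY a ha

end Stmt12
end

section
/- Let X ⊆ ℝ^{d_X} and Y ⊆ ℝ^{d_Y} be compact Borel sets, μ ∈ P(X), ν ∈ P(Y), let p ∈ ℕ be odd, let c_X, c_Y be polynomials, and set Z = X × Y × X × Y, g(z) = c_X(x,x') − c_Y(y,y') for z = (x,y,x',y'), A^+ = { z ∈ Z : g(z) ≥ 0 }, A^- = { z ∈ Z : g(z) < 0 }. Then GW_p^p(c_X, c_Y, μ, ν) = inf { ∫_Z g(z)^p dγ^+(z) − ∫_Z g(z)^p dγ^-(z) }, where the infimum runs over π ∈ Π(X×Y; μ,ν), γ^+ a finite positive Borel measure supported on A^+, and γ^- a finite positive Borel measure supported on the closure of A^-, subject to γ^+ + γ^- = π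 ⊗ π; the optimal value equals inf_{π ∈ Π(X×Y; μ,ν)} ∬ |c_X(x,x') − c_Y(y,y')|^p dπ(x,y) dπ(x',y'). -/
/-!
For odd `p` the sign of `g^p` is that of `g`. On `A⁺` one has `g^p = |g|^p`, and on the closure
of `A⁻` one has `g ≤ 0` by continuity, hence `g^p = -|g|^p`. So for every admissible
`(π, γ⁺, γ⁻)` the objective is `∫ |g|^p d(γ⁺ + γ⁻) = ∫ |g|^p d(π ⊗ π)`, which is the
Gromov–Wasserstein integrand of `π` by Fubini. Conversely, restricting `π ⊗ π` to `A⁺` and `A⁻`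
gives an admissible split for every coupling `π`, so both infima range over the same set of
values. Compactness of `X × Y` makes `|g|^p` bounded, hence integrable, on the support of `π ⊗ π`.
-/

open MeasureTheory

namespace Stmt13

variable {dX dY : ℕ}

/-- Couplings `Π(X×Y; μ, ν)`. -/
def CouplingsXY (X : Set (Fin dX → ℝ)) (Y : Set (Fin dY → ℝ))
    (μ : Measure (Fin dX → ℝ)) (ν : Measure (Fin dY → ℝ)) :
    Set (Measure ((Fin dX → ℝ) × (Fin dY → ℝ))) :=
  {π | IsProbabilityMeasure π ∧ π (X ×ˢ Y)ᶜ = 0 ∧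
    π.map Prod.fst = μ ∧ π.map Prod.snd = ν}

/-- The function `g(z) = c_X(x,x') − c_Y(y,y')` on `Z = (X×Y) × (X×Y)`,
for `z = ((x,y),(x',y'))`. -/
noncomputable def gfun (cX : MvPolynomial (Fin dX ⊕ Fin dX) ℝ)
    (cY : MvPolynomial (Fin dY ⊕ Fin dY) ℝ)
    (z : ((Fin dX → ℝ) × (Fin dY → ℝ)) × ((Fin dX → ℝ) × (Fin dY → ℝ))) : ℝ :=
  MvPolynomial.eval (Sum.elim z.1.1 z.2.1) cX - MvPolynomial.eval (Sum.elim z.1.2 z.2.2) cY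

theorem continuous_gfun (cX : MvPolynomial (Fin dX ⊕ Fin dX) ℝ)
    (cY : MvPolynomial (Fin dY ⊕ Fin dY) ℝ) : Continuous (gfun cX cY) := by
  refine ((MvPolynomial.continuous_eval cX).comp ?_).sub ((MvPolynomial.continuous_eval cY).comp ?_)
  all_goals
    refine continuous_pi fun i => ?_
    rcases i with j | j <;> simp only [Sum.elim_inl, Sum.elim_inr] <;> fun_prop

end Stmt13

namespace MeasureTheory

variable {Z : Type*} [MeasurableSpace Z]

open Set

theorem Continuous.integrable_of_measure_compl_eq_zero [TopologicalSpace Z] [T2Space Z]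
    [OpensMeasurableSpace Z] {E : Type*} [NormedAddCommGroup E] {f : Z → E} {K : Set Z}
    {θ : Measure Z} [IsFiniteMeasure θ] (hf : Continuous f) (hK : IsCompact K)
    (hθ : θ Kᶜ = 0) : Integrable f θ := by
  have hfK : IntegrableOn f K θ := hf.continuousOn.integrableOn_compact hK
  rwa [IntegrableOn, Measure.restrict_eq_self_of_ae_mem (mem_ae_iff.mpr hθ)] at hfK

theorem ae_nonpos_of_measure_compl_closure_eq_zero [TopologicalSpace Z] {g : Z → ℝ}
    (hg : Continuous g) {s : Set Z} (hs : s ⊆ {z | g z ≤ 0}) {θ : Measure Z}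
    (hθ : θ (closure s)ᶜ = 0) : ∀ᵐ z ∂θ, g z ≤ 0 :=
  Filter.mem_of_superset (mem_ae_iff.mpr hθ) (closure_minimal hs (isClosed_le hg continuous_const))

theorem integral_pow_sub_integral_pow_of_ae_sign {g : Z → ℝ} {p : ℕ} (hp : Odd p)
    {γp γm : Measure Z} (hip : Integrable (fun z => |g z| ^ p) γp)
    (him : Integrable (fun z => |g z| ^ p) γm) (hgp : ∀ᵐ z ∂γp, 0 ≤ g z)
    (hgm : ∀ᵐ z ∂γm, g z ≤ 0) :
    ∫ z, g z ^ p ∂γp - ∫ z, g z ^ p ∂γm = ∫ z, |g z| ^ p ∂(γp + γm) := by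
  have hplus : ∫ z, g z ^ p ∂γp = ∫ z, |g z| ^ p ∂γp :=
    integral_congr_ae (hgp.mono fun z hz => by simp only [abs_of_nonneg hz])
  have hminus : ∫ z, g z ^ p ∂γm = -∫ z, |g z| ^ p ∂γm := by
    rw [← integral_neg]
    exact integral_congr_ae (hgm.mono fun z hz => by
      simp only [abs_of_nonpos hz, hp.neg_pow, neg_neg])
  rw [hplus, hminus, sub_neg_eq_add, integral_add_measure hip him]

theorem integral_pow_sub_integral_pow_eq_integral_abs_pow [TopologicalSpace Z] [T2Space Z]
    [OpensMeasurableSpace Z] {K : Set Z} (hK : IsCompact K) {g : Z → ℝ} (hg : Continuous g)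
    {p : ℕ} (hp : Odd p) {γp γm : Measure Z} [IsFiniteMeasure γp] [IsFiniteMeasure γm]
    (hγp : γp {z ∈ K | 0 ≤ g z}ᶜ = 0) (hγm : γm (closure {z ∈ K | g z < 0})ᶜ = 0) :
    ∫ z, g z ^ p ∂γp - ∫ z, g z ^ p ∂γm = ∫ z, |g z| ^ p ∂(γp + γm) := by
  have hγpK : γp Kᶜ = 0 := measure_mono_null (compl_subset_compl.mpr (sep_subset _ _)) hγp
  have hγmK : γm Kᶜ = 0 := measure_mono_null
    (compl_subset_compl.mpr (closure_minimal (sep_subset _ _) hK.isClosed)) hγm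
  have hgp : ∀ᵐ z ∂γp, 0 ≤ g z := Filter.mem_of_superset (mem_ae_iff.mpr hγp) fun _ hz => hz.2
  have hgm : ∀ᵐ z ∂γm, g z ≤ 0 :=
    ae_nonpos_of_measure_compl_closure_eq_zero hg (fun _ hz => hz.2.le) hγm
  exact integral_pow_sub_integral_pow_of_ae_sign hp
    ((hg.abs.pow p).integrable_of_measure_compl_eq_zero hK hγpK)
    ((hg.abs.pow p).integrable_of_measure_compl_eq_zero hK hγmK) hgp hgm

theorem Measure.restrict_sep_nonneg_add_restrict_sep_neg {θ : Measure Z} {K : Set Z}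
    {g : Z → ℝ} (hg : Measurable g) (hθ : θ Kᶜ = 0) :
    θ.restrict {z ∈ K | 0 ≤ g z} + θ.restrict {z ∈ K | g z < 0} = θ := by
  have hK : K =ᵐ[θ] univ := ae_eq_univ.mpr hθ
  change θ.restrict (K ∩ {z | 0 ≤ g z}) + θ.restrict (K ∩ {z | g z < 0}) = θ
  rw [Measure.restrict_congr_set (inter_ae_eq_right_of_ae_eq_univ (t := {z | 0 ≤ g z}) hK),
    Measure.restrict_congr_set (inter_ae_eq_right_of_ae_eq_univ (t := {z | g z < 0}) hK)]
  simpa only [compl_ofPred, not_le] using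
    Measure.restrict_add_restrict_compl (μ := θ) (measurableSet_le measurable_const hg)

theorem Measure.restrict_compl_eq_zero {θ : Measure Z} {s : Set Z} (hs : MeasurableSet s) :
    θ.restrict s sᶜ = 0 :=
  mem_ae_iff.mp (ae_restrict_mem hs)

end MeasureTheory

namespace Stmt13

theorem stmt_13_general (p : ℕ) (hp : Odd p)
    (X : Set (Fin dX → ℝ)) (Y : Set (Fin dY → ℝ))
    (hX : IsCompact X) (hY : IsCompact Y)
    (μ : Measure (Fin dX → ℝ)) (ν : Measure (Fin dY → ℝ))
    (cX : MvPolynomial (Fin dX ⊕ Fin dX) ℝ)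
    (cY : MvPolynomial (Fin dY ⊕ Fin dY) ℝ) :
    sInf {v | ∃ π ∈ CouplingsXY X Y μ ν,
      ∃ γp γm :
        Measure (((Fin dX → ℝ) × (Fin dY → ℝ)) × ((Fin dX → ℝ) × (Fin dY → ℝ))),
        IsFiniteMeasure γp ∧
        γp {z ∈ (X ×ˢ Y) ×ˢ (X ×ˢ Y) | 0 ≤ gfun cX cY z}ᶜ = 0 ∧
        IsFiniteMeasure γm ∧
        γm (closure {z ∈ (X ×ˢ Y) ×ˢ (X ×ˢ Y) | gfun cX cY z < 0})ᶜ = 0 ∧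
        γp + γm = π.prod π ∧
        v = (∫ z, gfun cX cY z ^ p ∂γp) - ∫ z, gfun cX cY z ^ p ∂γm} =
    sInf {v | ∃ π ∈ CouplingsXY X Y μ ν,
      v = ∫ z, ∫ z', |gfun cX cY (z, z')| ^ p ∂π ∂π} := by
  set K := (X ×ˢ Y) ×ˢ (X ×ˢ Y)
  have hK : IsCompact K := (hX.prod hY).prod (hX.prod hY)
  have hg := continuous_gfun cX cY
  have hnull : ∀ π ∈ CouplingsXY X Y μ ν, (π.prod π) Kᶜ = 0 :=
    fun π hπ => haveI := hπ.1; Measure.measure_prod_compl_eq_zero hπ.2.1 hπ.2.1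
  have hGW : ∀ π ∈ CouplingsXY X Y μ ν,
      ∫ z, ∫ z', |gfun cX cY (z, z')| ^ p ∂π ∂π = ∫ z, |gfun cX cY z| ^ p ∂(π.prod π) := by
    intro π hπ
    have := hπ.1
    exact (integral_prod _
      ((hg.abs.pow p).integrable_of_measure_compl_eq_zero hK (hnull π hπ))).symm
  congr 1
  ext v
  constructor
  · rintro ⟨π, hπ, γp, γm, hfp, hγp, hfm, hγm, hsum, rfl⟩
    refine ⟨π, hπ, ?_⟩
    rw [hGW π hπ, ← hsum]
    exact integral_pow_sub_integral_pow_eq_integral_abs_pow hK hg hp hγp hγm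
  · rintro ⟨π, hπ, rfl⟩
    have := hπ.1
    set S := {z ∈ K | 0 ≤ gfun cX cY z}
    set T := {z ∈ K | gfun cX cY z < 0}
    have hγp : (π.prod π).restrict S Sᶜ = 0 := Measure.restrict_compl_eq_zero
      (hK.measurableSet.inter (measurableSet_le measurable_const hg.measurable))
    have hγm : (π.prod π).restrict T (closure T)ᶜ = 0 :=
      measure_mono_null (Set.compl_subset_compl.mpr subset_closure)
        (Measure.restrict_compl_eq_zero
          (hK.measurableSet.inter (measurableSet_lt hg.measurable measurable_const)))
    have hsum := Measure.restrict_sep_nonneg_add_restrict_sep_neg hg.measurable (hnull π hπ)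
    refine ⟨π, hπ, _, _, inferInstance, hγp, inferInstance, hγm, hsum, ?_⟩
    rw [hGW π hπ, integral_pow_sub_integral_pow_eq_integral_abs_pow hK hg hp hγp hγm, hsum]

/-- For compact `X`, `Y`, probability measures `μ ∈ P(X)`, `ν ∈ P(Y)`,
odd `p` and polynomial costs `c_X, c_Y`, with `A⁺ = {z ∈ Z : g(z) ≥ 0}` and
`A⁻ = {z ∈ Z : g(z) < 0}` on `Z = (X×Y)²`: the value
`inf { ∫ g^p dγ⁺ − ∫ g^p dγ⁻ }` over couplings `π ∈ Π(X×Y;μ,ν)` and finite positive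
measures `γ⁺` supported on `A⁺`, `γ⁻` supported on the closure of `A⁻`, subject to
`γ⁺ + γ⁻ = π ⊗ π`, equals `GW_p^p = inf_{π} ∬ |c_X − c_Y|^p dπ dπ`. -/
theorem stmt_13 (p : ℕ) (hp : Odd p)
    (X : Set (Fin dX → ℝ)) (Y : Set (Fin dY → ℝ))
    (hX : IsCompact X) (hY : IsCompact Y)
    (μ : Measure (Fin dX → ℝ)) (ν : Measure (Fin dY → ℝ))
    [IsProbabilityMeasure μ] [IsProbabilityMeasure ν]
    (hμ : μ Xᶜ = 0) (hν : ν Yᶜ = 0)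
    (cX : MvPolynomial (Fin dX ⊕ Fin dX) ℝ)
    (cY : MvPolynomial (Fin dY ⊕ Fin dY) ℝ) :
    sInf {v | ∃ π ∈ CouplingsXY X Y μ ν,
      ∃ γp γm :
        Measure (((Fin dX → ℝ) × (Fin dY → ℝ)) × ((Fin dX → ℝ) × (Fin dY → ℝ))),
        IsFiniteMeasure γp ∧
        γp {z ∈ (X ×ˢ Y) ×ˢ (X ×ˢ Y) | 0 ≤ gfun cX cY z}ᶜ = 0 ∧
        IsFiniteMeasure γm ∧
        γm (closure {z ∈ (X ×ˢ Y) ×ˢ (X ×ˢ Y) | gfun cX cY z < 0})ᶜ = 0 ∧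
        γp + γm = π.prod π ∧
        v = (∫ z, gfun cX cY z ^ p ∂γp) - ∫ z, gfun cX cY z ^ p ∂γm} =
    sInf {v | ∃ π ∈ CouplingsXY X Y μ ν,
      v = ∫ z, ∫ z', |gfun cX cY (z, z')| ^ p ∂π ∂π} :=
  stmt_13_general p hp X Y hX hY μ ν cX cY

end Stmt13
end

section
/- Let n ∈ ℕ, R > 0, r ∈ ℕ, and let y = (y_α)_{α∈ℕ^n} be a sequence of real numbers such that ℓ_y(f²) ≥ 0 for every polynomial f ∈ ℝ[x] of degree at most r, and ℓ_y((R² − ‖x‖₂²) f²) ≥ 0 for every polynomial f ∈ ℝ[x] of degree at most r − 1 (equivalently, the moment matrix M_r(y) and the localizing matrix M_{r−1}((R² − ‖x‖₂²) y) are positive semidefinite). Then for every 0 ≤ k ≤ r and every multi-index α ∈ ℕ^n with |α| ≤ 2k, one has |y_α| ≤ y_0 · max{1, R^{2k}}. -/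
open MeasureTheory

/-- The Riesz functional `ℓ_y(p) = Σ_α p_α y_α` associated with the sequence `y`. -/
noncomputable def riesz {n : ℕ} (y : (Fin n →₀ ℕ) → ℝ) (p : MvPolynomial (Fin n) ℝ) : ℝ :=
  ∑ α ∈ p.support, p.coeff α * y α

/-!
Cauchy–Schwarz for the positive semidefinite form `(f, g) ↦ ℓ_y(f g)` on polynomials of degree
at most `r` gives `y_{β+γ}² ≤ ℓ_y(x^{2β}) ℓ_y(x^{2γ})`. The localizing condition says
`Σ_i ℓ_y((x_i f)²) ≤ R² ℓ_y(f²)`, so multiplying by one variable costs at most a factor `R²` and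
`ℓ_y(x^{2β}) ≤ R^{2|β|} y_0`. Splitting `α` into two halves of degree at most `k` yields
`|y_α| ≤ R^{|α|} y_0 ≤ max{1, R^{2k}} y_0`.
-/

open MvPolynomial

theorem LinearMap.sq_apply_mul_le {A : Type*} [CommRing A] [Algebra ℝ A] (L : A →ₗ[ℝ] ℝ)
    {f g : A} (h : ∀ t : ℝ, 0 ≤ L ((f + t • g) ^ 2)) :
    L (f * g) ^ 2 ≤ L (f ^ 2) * L (g ^ 2) := by
  have hquad (t : ℝ) : 0 ≤ L (g ^ 2) * (t * t) + 2 * L (f * g) * t + L (f ^ 2) := by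
    have hexpand : (f + t • g) ^ 2 = f ^ 2 + (2 * t) • (f * g) + (t * t) • g ^ 2 := by
      simp only [Algebra.smul_def, map_mul, map_ofNat]; ring
    have := h t
    rw [hexpand, map_add, map_add, map_smul, map_smul, smul_eq_mul, smul_eq_mul] at this
    linarith
  have hdiscr := discrim_le_zero hquad
  rw [discrim] at hdiscr
  linarith

section Riesz

variable {n : ℕ} (y : (Fin n →₀ ℕ) → ℝ)

theorem riesz_eq_sum_of_support_subset {p : MvPolynomial (Fin n) ℝ} {s : Finset (Fin n →₀ ℕ)}
    (hs : p.support ⊆ s) : riesz y p = ∑ α ∈ s, p.coeff α * y α :=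
  Finset.sum_subset hs fun α _ hα => by simp [notMem_support_iff.mp hα]

noncomputable def rieszLinearMap : MvPolynomial (Fin n) ℝ →ₗ[ℝ] ℝ where
  toFun := riesz y
  map_add' p q := by
    classical
    rw [riesz_eq_sum_of_support_subset y (support_add (p := p) (q := q)),
      riesz_eq_sum_of_support_subset y Finset.subset_union_left,
      riesz_eq_sum_of_support_subset y Finset.subset_union_right, ← Finset.sum_add_distrib]
    simp only [coeff_add, add_mul]
  map_smul' c p := by
    rw [riesz_eq_sum_of_support_subset y support_smul, riesz, RingHom.id_apply, smul_eq_mul,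
      Finset.mul_sum]
    simp only [coeff_smul, smul_eq_mul, mul_assoc]

@[simp]
theorem rieszLinearMap_apply (p : MvPolynomial (Fin n) ℝ) : rieszLinearMap y p = riesz y p := rfl

theorem riesz_monomial_one (α : Fin n →₀ ℕ) : riesz y (monomial α 1) = y α := by
  classical
  simp [riesz, support_monomial]

theorem riesz_one : riesz y 1 = y 0 := by
  rw [one_def, riesz_monomial_one]

end Riesz

section Moments

variable {n : ℕ} {y : (Fin n →₀ ℕ) → ℝ} {r : ℕ} {R : ℝ}

def MomentMatrixPSD (y : (Fin n →₀ ℕ) → ℝ) (r : ℕ) : Prop :=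
  ∀ f : MvPolynomial (Fin n) ℝ, f.totalDegree ≤ r → 0 ≤ riesz y (f ^ 2)

def BallLocalizingMatrixPSD (y : (Fin n →₀ ℕ) → ℝ) (R : ℝ) (r : ℕ) : Prop :=
  ∀ f : MvPolynomial (Fin n) ℝ, f.totalDegree + 1 ≤ r →
    0 ≤ riesz y ((C (R ^ 2) - ∑ i, X i ^ 2) * f ^ 2)

theorem MomentMatrixPSD.apply_zero_nonneg (hM : MomentMatrixPSD y r) : 0 ≤ y 0 := by
  simpa [riesz_one] using hM 1 (by simp)

theorem MomentMatrixPSD.sq_riesz_mul_le (hM : MomentMatrixPSD y r) {f g : MvPolynomial (Fin n) ℝ}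
    (hf : f.totalDegree ≤ r) (hg : g.totalDegree ≤ r) :
    riesz y (f * g) ^ 2 ≤ riesz y (f ^ 2) * riesz y (g ^ 2) :=
  (rieszLinearMap y).sq_apply_mul_le fun _ =>
    hM _ ((totalDegree_add _ _).trans (max_le hf ((totalDegree_smul_le _ _).trans hg)))

theorem riesz_X_mul_sq_le (hM : MomentMatrixPSD y r) (hL : BallLocalizingMatrixPSD y R r)
    {f : MvPolynomial (Fin n) ℝ} (hf : f.totalDegree + 1 ≤ r) (i : Fin n) :
    riesz y ((X i * f) ^ 2) ≤ R ^ 2 * riesz y (f ^ 2) := by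
  have hloc : riesz y ((C (R ^ 2) - ∑ j, X j ^ 2) * f ^ 2)
      = R ^ 2 * riesz y (f ^ 2) - ∑ j, riesz y ((X j * f) ^ 2) := by
    have hpoly : (C (R ^ 2) - ∑ j, X j ^ 2) * f ^ 2 = R ^ 2 • f ^ 2 - ∑ j, (X j * f) ^ 2 := by
      simp only [smul_eq_C_mul, sub_mul, Finset.sum_mul, mul_pow]
    rw [hpoly, ← rieszLinearMap_apply, map_sub, map_smul, map_sum]
    rfl
  have hsum : riesz y ((X i * f) ^ 2) ≤ ∑ j, riesz y ((X j * f) ^ 2) :=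
    Finset.single_le_sum (fun j _ => hM _ ((totalDegree_mul _ _).trans (by
      rw [totalDegree_X]; omega))) (Finset.mem_univ i)
  linarith [hL f hf]

theorem riesz_monomial_mul_sq_le (hM : MomentMatrixPSD y r) (hL : BallLocalizingMatrixPSD y R r)
    (β : Fin n →₀ ℕ) {f : MvPolynomial (Fin n) ℝ} (hf : f.totalDegree + β.degree ≤ r) :
    riesz y ((monomial β 1 * f) ^ 2) ≤ R ^ (2 * β.degree) * riesz y (f ^ 2) := by
  induction β using WellFoundedLT.induction with
  | ind β ih =>
  rcases eq_or_ne β 0 with rfl | hβ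
  · rw [← one_def, one_mul, map_zero, mul_zero, pow_zero, one_mul]
  obtain ⟨i, hi⟩ : ∃ i, β i ≠ 0 := by simpa [Finsupp.ext_iff] using hβ
  set β' := β - Finsupp.single i 1
  have hβ' : β' + Finsupp.single i 1 = β := Finsupp.sub_add_single_one_cancel hi
  have hdeg : β.degree = β'.degree + 1 := by rw [← hβ', map_add, Finsupp.degree_single]
  have hlt : β' < β := by
    rw [← hβ']
    exact lt_add_of_pos_right _ (pos_iff_ne_zero.mpr (by simp))
  have hg : (monomial β' 1 * f).totalDegree + 1 ≤ r := by
    have := totalDegree_mul (monomial β' (1 : ℝ)) f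
    rw [totalDegree_monomial _ one_ne_zero] at this
    change _ ≤ β'.degree + _ at this
    omega
  calc riesz y ((monomial β 1 * f) ^ 2)
      = riesz y ((X i * (monomial β' 1 * f)) ^ 2) := by
        rw [← hβ', monomial_add_single, pow_one, mul_comm _ (X i), mul_assoc]
    _ ≤ R ^ 2 * riesz y ((monomial β' 1 * f) ^ 2) := riesz_X_mul_sq_le hM hL hg i
    _ ≤ R ^ 2 * (R ^ (2 * β'.degree) * riesz y (f ^ 2)) :=
        mul_le_mul_of_nonneg_left (ih β' hlt (by omega)) (sq_nonneg R)
    _ = R ^ (2 * β.degree) * riesz y (f ^ 2) := by rw [hdeg]; ring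

theorem abs_apply_le_pow_degree_mul (hR : 0 ≤ R) (hM : MomentMatrixPSD y r)
    (hL : BallLocalizingMatrixPSD y R r) {α : Fin n →₀ ℕ} (hα : α.degree ≤ 2 * r) :
    |y α| ≤ R ^ α.degree * y 0 := by
  obtain ⟨β, hβα, hβ⟩ := Finsupp.exists_le_degree_eq α (α.degree / 2) (Nat.div_le_self _ _)
  obtain ⟨γ, rfl⟩ := exists_add_of_le hβα
  have hγ : γ.degree ≤ r := by rw [map_add] at hα hβ; omega
  have htotalDegree {δ : Fin n →₀ ℕ} (hδ : δ.degree ≤ r) :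
      (monomial δ (1 : ℝ)).totalDegree ≤ r := by
    rwa [totalDegree_monomial _ one_ne_zero]
  have hdiag {δ : Fin n →₀ ℕ} (hδ : δ.degree ≤ r) :
      riesz y (monomial δ 1 ^ 2) ≤ R ^ (2 * δ.degree) * y 0 := by
    simpa [riesz_one] using riesz_monomial_mul_sq_le hM hL δ (f := 1) (by simpa using hδ)
  have hβr : β.degree ≤ r := by omega
  have hy0 := hM.apply_zero_nonneg
  have hsq : y (β + γ) ^ 2 ≤ (R ^ (β + γ).degree * y 0) ^ 2 := calc
    y (β + γ) ^ 2 = riesz y (monomial β 1 * monomial γ 1) ^ 2 := by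
      rw [monomial_mul, one_mul, riesz_monomial_one]
    _ ≤ riesz y (monomial β 1 ^ 2) * riesz y (monomial γ 1 ^ 2) :=
      hM.sq_riesz_mul_le (htotalDegree hβr) (htotalDegree hγ)
    _ ≤ (R ^ (2 * β.degree) * y 0) * (R ^ (2 * γ.degree) * y 0) :=
      mul_le_mul (hdiag hβr) (hdiag hγ) (hM _ (htotalDegree hγ)) (mul_nonneg (pow_nonneg hR _) hy0)
    _ = (R ^ (β + γ).degree * y 0) ^ 2 := by rw [map_add]; ring
  exact abs_le_of_sq_le_sq hsq (mul_nonneg (pow_nonneg hR _) hy0)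

end Moments

theorem pow_le_max_one_pow {M : Type*} [Semiring M] [LinearOrder M] [IsOrderedRing M] {a : M}
    (ha : 0 ≤ a) {m k : ℕ} (h : m ≤ k) : a ^ m ≤ max 1 (a ^ k) := by
  rcases le_total a 1 with ha1 | ha1
  · exact le_max_of_le_left (pow_le_one₀ ha ha1)
  · exact le_max_of_le_right (pow_le_pow_right₀ ha1 h)

/-- Let `y` be a sequence with `ℓ_y(f²) ≥ 0` for every polynomial `f` of
degree at most `r` and `ℓ_y((R² − ‖x‖₂²) f²) ≥ 0` for every `f` of degree at most `r − 1`
(positive semidefiniteness of the moment and localizing matrices `M_r(y)` and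
`M_{r−1}((R²−‖x‖₂²) y)`). Then for every `0 ≤ k ≤ r` and every multi-index `α` with
`|α| ≤ 2k`, one has `|y_α| ≤ y_0 · max{1, R^{2k}}`. -/
theorem stmt_14 {n : ℕ} (R : ℝ) (hR : 0 < R) (r : ℕ)
    (y : (Fin n →₀ ℕ) → ℝ)
    (h1 : ∀ f : MvPolynomial (Fin n) ℝ, f.totalDegree ≤ r → 0 ≤ riesz y (f ^ 2))
    (h2 : ∀ f : MvPolynomial (Fin n) ℝ, f.totalDegree + 1 ≤ r →
      0 ≤ riesz y ((MvPolynomial.C (R ^ 2) - ∑ i, MvPolynomial.X i ^ 2) * f ^ 2)) :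
    ∀ k ≤ r, ∀ α : Fin n →₀ ℕ, (α.sum fun _ e => e) ≤ 2 * k →
      |y α| ≤ y 0 * max 1 (R ^ (2 * k)) := by
  intro k hk α hα
  calc |y α| ≤ R ^ α.degree * y 0 :=
        abs_apply_le_pow_degree_mul hR.le h1 h2 (hα.trans (by omega))
    _ ≤ max 1 (R ^ (2 * k)) * y 0 :=
        mul_le_mul_of_nonneg_right (pow_le_max_one_pow hR.le hα)
          (MomentMatrixPSD.apply_zero_nonneg h1)
    _ = y 0 * max 1 (R ^ (2 * k)) := mul_comm _ _
end
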